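/- arXiv:2601.16120 — 3 statements merged into one kernel-verified Lean document; each statement's English description precedes it below -/
import Mathlib

section
/- Suppose R: ℝᵈ → ℝ is differentiable with minimizer θ* satisfying R(θ) − R(θ*) ≥ (μ/2)‖θ − θ*‖² for all θ (quadratic growth with constant μ > 0), and R̃: ℝᵈ → ℝ is differentiable with minimizer θ̃ such that ‖∇R̃(θ) − ∇R̃(θ̃)‖ ≤ M‖θ − θ̃‖ for all θ. If ∇R̃(θ) = ∇R(θ) + b(θ) for a vector field b with ∇R(θ*) = 0, then R(θ̃) − R(θ*) ≥ (μ/(2M²))‖b(θ*)‖². -/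
/-- lower bound on the excess balanced risk in terms of the
first-order bias vector `b(θ*) = ∇R̃(θ*) − ∇R(θ*)`. -/
theorem excess_risk_lower_bound {d : ℕ}
    (R Rt : EuclideanSpace ℝ (Fin d) → ℝ)
    (θstar θtilde : EuclideanSpace ℝ (Fin d))
    (μ M : ℝ) (hμ : 0 < μ) (hM : 0 < M)
    (hRdiff : Differentiable ℝ R) (hRtdiff : Differentiable ℝ Rt)
    (b : EuclideanSpace ℝ (Fin d) → EuclideanSpace ℝ (Fin d))
    (hb : ∀ θ, gradient Rt θ = gradient R θ + b θ)
    (hgrow : ∀ θ, R θ - R θstar ≥ μ / 2 * ‖θ - θstar‖ ^ 2)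
    (hminR : ∀ θ, R θstar ≤ R θ)
    (hgradstar : gradient R θstar = 0)
    (hminRt : ∀ θ, Rt θtilde ≤ Rt θ)
    (hgradtilde : gradient Rt θtilde = 0)
    (hLip : ∀ θ, ‖gradient Rt θ - gradient Rt θtilde‖ ≤ M * ‖θ - θtilde‖) :
    R θtilde - R θstar ≥ μ / (2 * M ^ 2) * ‖b θstar‖ ^ 2 := by
  have h1 : ‖b θstar‖ ≤ M * ‖θstar - θtilde‖ := by
    have := hLip θstar
    rw [hgradtilde, hb θstar, hgradstar, sub_zero, zero_add] at this
    exact this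
  have h2 : ‖θstar - θtilde‖ = ‖θtilde - θstar‖ := norm_sub_rev _ _
  have h3 : ‖b θstar‖ ^ 2 ≤ M ^ 2 * ‖θtilde - θstar‖ ^ 2 := by
    rw [← mul_pow, ← h2]
    exact pow_le_pow_left₀ (norm_nonneg _) h1 2
  have h4 := hgrow θtilde
  have h5 : μ / (2 * M ^ 2) * ‖b θstar‖ ^ 2 ≤ μ / 2 * ‖θtilde - θstar‖ ^ 2 := by
    rw [div_mul_eq_mul_div, div_mul_eq_mul_div, div_le_div_iff₀ (by positivity) (by norm_num)]
    nlinarith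
  linarith
end

section
/- In the two-dimensional Gaussian squared-loss model with P₀ = N(0, I₂), P₁ = N((μ,0)ᵀ, I₂), P_syn = N((a,0)ᵀ, I₂), and mixture weights π₀ = n₀/N, π₁ = n₁/N, π̃ = ñ/N where N = n₀+n₁+ñ, the synthetic population risk R̃(θ) = π₀E_{P₀}(θᵀx)² + π₁E_{P₁}(θᵀx−1)² + π̃E_{P_syn}(θᵀx−1)² is minimized at θ* = (μ/(μ²+2), 0)ᵀ if and only if ñ·(a(μ²+2) − μ(a²+1)) = μ(n₀ − n₁), provided a(μ²+2) ≠ μ(a²+1). -/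
/-- in the 2D Gaussian squared-loss model with synthetic mean `(a,0)`,
the synthetic population risk is minimized at the balanced minimizer
`θ* = (μ/(μ²+2), 0)` if and only if `ñ·(a(μ²+2) − μ(a²+1)) = μ(n₀ − n₁)`.
Expectations are encoded via `E_{N(ν,I₂)}[(θᵀx − y)²] = θᵀθ + (θᵀν − y)²`. -/
theorem synthetic_risk_minimized_iff (μ a n0 n1 nt : ℝ)
    (hn0 : 0 < n0) (hn1 : 0 < n1) (hnt : 0 ≤ nt)
    (hnd : a * (μ ^ 2 + 2) - μ * (a ^ 2 + 1) ≠ 0)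
    (Rt : ℝ × ℝ → ℝ)
    (hRt : ∀ θ, Rt θ =
        (n0 / (n0 + n1 + nt)) * ((θ.1 ^ 2 + θ.2 ^ 2) + ((0 : ℝ) - 0) ^ 2)
      + (n1 / (n0 + n1 + nt)) * ((θ.1 ^ 2 + θ.2 ^ 2) + (θ.1 * μ - 1) ^ 2)
      + (nt / (n0 + n1 + nt)) * ((θ.1 ^ 2 + θ.2 ^ 2) + (θ.1 * a - 1) ^ 2)) :
    (∀ θ, Rt (μ / (μ ^ 2 + 2), 0) ≤ Rt θ) ↔
      nt * (a * (μ ^ 2 + 2) - μ * (a ^ 2 + 1)) = μ * (n0 - n1) := by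
  set N : ℝ := n0 + n1 + nt with hNdef
  have hN : 0 < N := by positivity
  set A : ℝ := N + n1 * μ ^ 2 + nt * a ^ 2 with hAdef
  have hA : 0 < A := by positivity
  set c : ℝ := μ / (μ ^ 2 + 2) with hcdef
  set D : ℝ := nt * (a * (μ ^ 2 + 2) - μ * (a ^ 2 + 1)) - μ * (n0 - n1) with hDdef
  have hm2 : (0:ℝ) < μ ^ 2 + 2 := by positivity
  have key : ∀ θ : ℝ × ℝ, Rt θ - Rt (c, 0) =
      (A * (θ.1 - c) ^ 2 - 2 * (θ.1 - c) * D / (μ ^ 2 + 2)) / N + θ.2 ^ 2 := by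
    intro θ
    rw [hRt, hRt]
    simp only [hcdef, hDdef, hAdef, hNdef]
    field_simp
    ring
  constructor
  · intro hmin
    have h := hmin (c + D / ((μ ^ 2 + 2) * A), 0)
    have h2 := key (c + D / ((μ ^ 2 + 2) * A), 0)
    simp only at h2
    have h3 : (0:ℝ) ≤ (A * (c + D / ((μ ^ 2 + 2) * A) - c) ^ 2 -
        2 * (c + D / ((μ ^ 2 + 2) * A) - c) * D / (μ ^ 2 + 2)) / N + (0:ℝ) ^ 2 := by
      rw [← h2]; linarith
    have h4 : (0:ℝ) ≤ -(D ^ 2) / ((μ ^ 2 + 2) ^ 2 * A * N) := by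
      have heq : (A * (c + D / ((μ ^ 2 + 2) * A) - c) ^ 2 -
          2 * (c + D / ((μ ^ 2 + 2) * A) - c) * D / (μ ^ 2 + 2)) / N + (0:ℝ) ^ 2
          = -(D ^ 2) / ((μ ^ 2 + 2) ^ 2 * A * N) := by
        field_simp
        ring
      linarith [heq ▸ h3]
    have hD0 : D = 0 := by
      have hpos : (0:ℝ) < (μ ^ 2 + 2) ^ 2 * A * N := by positivity
      have h5 : (0:ℝ) ≤ -(D ^ 2) := by
        rcases div_nonneg_iff.mp h4 with ⟨h, _⟩ | ⟨_, h⟩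
        · exact h
        · linarith
      have h6 : D ^ 2 = 0 := le_antisymm (by linarith) (sq_nonneg D)
      exact pow_eq_zero_iff (by norm_num) |>.mp h6
    have := hD0
    rw [hDdef] at this
    linarith
  · intro hc θ
    have hD0 : D = 0 := by rw [hDdef]; linarith
    have h2 := key θ
    rw [hD0] at h2
    have : (0:ℝ) ≤ (A * (θ.1 - c) ^ 2 - 2 * (θ.1 - c) * 0 / (μ ^ 2 + 2)) / N + θ.2 ^ 2 := by
      have : (A * (θ.1 - c) ^ 2 - 2 * (θ.1 - c) * 0 / (μ ^ 2 + 2)) / N + θ.2 ^ 2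
          = A * (θ.1 - c) ^ 2 / N + θ.2 ^ 2 := by ring
      rw [this]; positivity
    linarith
end

section
/- In the two-dimensional Gaussian squared-loss model with mixture weights π₀, π₁, π̃ summing to 1, P₀ = N(0, I₂), P₁ = N((μ,0)ᵀ, I₂), P_syn = N((μ,μ)ᵀ, I₂), the minimizer θ̃ of R̃(θ) = π₀E_{P₀}(θᵀx)² + π₁E_{P₁}(θᵀx−1)² + π̃E_{P_syn}(θᵀx−1)² has second coordinate θ̃₂ = π̃μ / (1 + π₁μ² + 2π̃μ² + π₁π̃μ⁴). Consequently, since R(θ) − R(θ*) ≥ θ₂² for the balanced risk R(θ) = θᵀθ + (1/2)(θ₁μ − 1)² with minimizer θ* = (μ/(μ²+2),0)ᵀ, if π̃ ≥ τ > 0 then R(θ̃) − R(θ*) ≥ (τμ/(1 + μ² + 2μ² + μ⁴))² > 0. -/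
set_option maxHeartbeats 2000000

/-- in the 2D Gaussian squared-loss model with orthogonal synthetic mean
`(μ,μ)`, the minimizer `θ̃` of the synthetic risk has explicit second coordinate, and
if the synthetic weight is at least `τ > 0` the balanced excess risk is bounded below
by a positive constant. -/
theorem orthogonal_bias_excess_risk (μ π0 π1 πt τ : ℝ)
    (hμ : 0 < μ) (h0 : 0 ≤ π0) (h1 : 0 ≤ π1) (ht : 0 ≤ πt)
    (hsum : π0 + π1 + πt = 1) (hτ : 0 < τ) (hπτ : τ ≤ πt)
    (Rt : ℝ × ℝ → ℝ)
    (hRt : ∀ θ, Rt θ = π0 * ((θ.1 ^ 2 + θ.2 ^ 2))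
        + π1 * ((θ.1 ^ 2 + θ.2 ^ 2) + (θ.1 * μ - 1) ^ 2)
        + πt * ((θ.1 ^ 2 + θ.2 ^ 2) + ((θ.1 + θ.2) * μ - 1) ^ 2))
    (R : ℝ × ℝ → ℝ)
    (hR : ∀ θ, R θ = (θ.1 ^ 2 + θ.2 ^ 2) + (1/2) * (θ.1 * μ - 1) ^ 2)
    (θt : ℝ × ℝ) (hmin : ∀ θ, Rt θt ≤ Rt θ) :
    θt.2 = πt * μ / (1 + π1 * μ ^ 2 + 2 * πt * μ ^ 2 + π1 * πt * μ ^ 4) ∧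
    R θt - R (μ / (μ ^ 2 + 2), 0)
        ≥ (τ * μ / (1 + μ ^ 2 + 2 * μ ^ 2 + μ ^ 4)) ^ 2 ∧
    0 < (τ * μ / (1 + μ ^ 2 + 2 * μ ^ 2 + μ ^ 4)) ^ 2 := by
  set D : ℝ := 1 + π1 * μ ^ 2 + 2 * πt * μ ^ 2 + π1 * πt * μ ^ 4 with hDdef
  have hD : 0 < D := by positivity
  set A : ℝ := μ * (π1 + πt + π1 * πt * μ ^ 2) / D with hA
  set B : ℝ := πt * μ / D with hB
  -- key identity
  have key : ∀ θ : ℝ × ℝ, Rt θ - Rt (A, B) =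
      (1 + π1 * μ ^ 2) * (θ.1 - A) ^ 2 + (θ.2 - B) ^ 2
        + πt * μ ^ 2 * ((θ.1 - A) + (θ.2 - B)) ^ 2 := by
    intro θ
    rw [hRt, hRt]
    have hπ0 : π0 = 1 - π1 - πt := by linarith
    rw [hA, hB, hπ0]
    field_simp
    ring
  have hle := hmin (A, B)
  have hk := key θt
  have h1μ : (0:ℝ) ≤ 1 + π1 * μ ^ 2 := by positivity
  have hptμ : (0:ℝ) ≤ πt * μ ^ 2 := by positivity
  have hsq1 : (0:ℝ) ≤ (θt.1 - A) ^ 2 := sq_nonneg _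
  have hsq2 : (0:ℝ) ≤ (θt.2 - B) ^ 2 := sq_nonneg _
  have hsq3 : (0:ℝ) ≤ ((θt.1 - A) + (θt.2 - B)) ^ 2 := sq_nonneg _
  have h2B : θt.2 = B := by nlinarith [mul_nonneg h1μ hsq1, mul_nonneg hptμ hsq3]
  refine ⟨h2B, ?_, by positivity⟩
  -- excess risk lower bound
  have hμ2 : (0:ℝ) < μ ^ 2 + 2 := by positivity
  have hRid : R θt - R (μ / (μ ^ 2 + 2), 0) =
      θt.2 ^ 2 + (1 + μ ^ 2 / 2) * (θt.1 - μ / (μ ^ 2 + 2)) ^ 2 := by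
    rw [hR, hR]
    field_simp
    ring
  have hC : (0:ℝ) < 1 + μ ^ 2 + 2 * μ ^ 2 + μ ^ 4 := by positivity
  have hDC : D ≤ 1 + μ ^ 2 + 2 * μ ^ 2 + μ ^ 4 := by
    have hπ1le : π1 ≤ 1 := by linarith
    have hπtle : πt ≤ 1 := by linarith
    have h14 : π1 * πt ≤ 1 := by nlinarith
    rw [hDdef]
    nlinarith [sq_nonneg μ, pow_pos hμ 4]
  have hfrac : τ * μ / (1 + μ ^ 2 + 2 * μ ^ 2 + μ ^ 4) ≤ B := by
    rw [hB]
    apply div_le_div₀ (by positivity)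
      (mul_le_mul_of_nonneg_right hπτ hμ.le) hD hDC
  have hfrac0 : (0:ℝ) ≤ τ * μ / (1 + μ ^ 2 + 2 * μ ^ 2 + μ ^ 4) := by positivity
  have hsq : (τ * μ / (1 + μ ^ 2 + 2 * μ ^ 2 + μ ^ 4)) ^ 2 ≤ B ^ 2 :=
    pow_le_pow_left₀ hfrac0 hfrac 2
  rw [hRid, h2B]
  nlinarith [sq_nonneg (θt.1 - μ / (μ ^ 2 + 2)), sq_nonneg μ]
end
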